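/- arXiv:1808.05679 — 6 statements merged into one kernel-verified Lean document; each statement's English description precedes it below -/
import Mathlib

section
/- Let m be a positive integer and let t_1, …, t_m be nonnegative real numbers with ∑_{i=1}^m t_i = 1. Then ∑_{i=1}^m t_i³ − (1 + 2/m)·∑_{i=1}^m t_i² + 1/m + 1/m² ≤ 0. -/
theorem stmt_2 (m : ℕ) (hm : 0 < m) (t : Fin m → ℝ)
    (hnonneg : ∀ i, 0 ≤ t i) (hsum : ∑ i, t i = 1) :
    ∑ i, (t i) ^ 3 - (1 + 2 / (m : ℝ)) * ∑ i, (t i) ^ 2 + 1 / (m : ℝ) + 1 / (m : ℝ) ^ 2 ≤ 0 := by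
  have hM : (0:ℝ) < (m:ℝ) := by exact_mod_cast hm
  set a : ℝ := 1 / (m:ℝ) with ha
  have ht1 : ∀ i, t i ≤ 1 := by
    intro i
    have := Finset.single_le_sum (f := t) (fun j _ => hnonneg j) (Finset.mem_univ i)
    linarith [this, hsum.ge, hsum.le]
  have key : ∀ i ∈ Finset.univ (α := Fin m),
      (t i - a)^3 ≤ (1 - a) * (t i - a)^2 := by
    intro i _
    nlinarith [sq_nonneg (t i - a), ht1 i]
  have hsumle := Finset.sum_le_sum key
  have hsum2 : ∑ i, (1 - a) * (t i - a)^2 = (1 - a) * ∑ i, (t i - a)^2 := by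
    rw [Finset.mul_sum]
  have e3 : ∑ i, (t i - a)^3
      = ∑ i, (t i)^3 - 3*a*∑ i, (t i)^2 + 3*a^2*∑ i, t i - (m:ℝ)*a^3 := by
    have : ∀ i ∈ Finset.univ (α := Fin m),
        (t i - a)^3 = (t i)^3 - 3*a*(t i)^2 + 3*a^2*(t i) - a^3 := by
      intro i _; ring
    rw [Finset.sum_congr rfl this, Finset.sum_sub_distrib, Finset.sum_add_distrib,
      Finset.sum_sub_distrib, ← Finset.mul_sum, ← Finset.mul_sum, Finset.sum_const,
      Finset.card_univ, Fintype.card_fin, nsmul_eq_mul]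
  have e2 : ∑ i, (t i - a)^2
      = ∑ i, (t i)^2 - 2*a*∑ i, t i + (m:ℝ)*a^2 := by
    have : ∀ i ∈ Finset.univ (α := Fin m),
        (t i - a)^2 = (t i)^2 - 2*a*(t i) + a^2 := by
      intro i _; ring
    rw [Finset.sum_congr rfl this, Finset.sum_add_distrib, Finset.sum_sub_distrib,
      ← Finset.mul_sum, Finset.sum_const, Finset.card_univ, Fintype.card_fin, nsmul_eq_mul]
  rw [hsum2, e3, e2, hsum] at hsumle
  have hma : (m:ℝ) * a = 1 := by rw [ha]; field_simp
  have hma2 : (m:ℝ) * a^2 = a := by rw [ha]; field_simp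
  have hma3 : (m:ℝ) * a^3 = a^2 := by rw [ha]; field_simp
  have h2 : 1 / (m:ℝ)^2 = a^2 := by rw [ha]; ring
  have h3 : 2 / (m:ℝ) = 2*a := by rw [ha]; ring
  rw [h2, h3, hma2, hma3] at *
  nlinarith [hsumle]
end

section
/- Let m ≥ 2 be an integer and let t_1, …, t_m be nonnegative real numbers with ∑_{i=1}^m t_i = 1. Then ∑_{i=1}^m t_i³ − (1 + 2/m)·∑_{i=1}^m t_i² + 1/m + 1/m² = 0 if and only if t_i = 1/m for every i. -/
theorem stmt_3 (m : ℕ) (hm : 2 ≤ m) (t : Fin m → ℝ)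
    (hnonneg : ∀ i, 0 ≤ t i) (hsum : ∑ i, t i = 1) :
    (∑ i, (t i) ^ 3 - (1 + 2 / (m : ℝ)) * ∑ i, (t i) ^ 2 + 1 / (m : ℝ) + 1 / (m : ℝ) ^ 2 = 0)
      ↔ ∀ i, t i = 1 / (m : ℝ) := by
  have hm0 : (m : ℝ) ≠ 0 := by
    have : (0 : ℝ) < m := by exact_mod_cast Nat.lt_of_lt_of_le Nat.zero_lt_two hm
    linarith
  have expand : ∀ i, (t i - 1 / m) ^ 2 * (t i - 1)
      = t i ^ 3 - (1 + 2 / m) * t i ^ 2 + (1 / m ^ 2 + 2 / m) * t i - 1 / m ^ 2 := by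
    intro i; field_simp; ring
  have key : ∑ i, (t i - 1 / m) ^ 2 * (t i - 1)
      = ∑ i, (t i) ^ 3 - (1 + 2 / (m : ℝ)) * ∑ i, (t i) ^ 2 + 1 / (m : ℝ) + 1 / (m : ℝ) ^ 2 := by
    rw [Finset.sum_congr rfl fun i _ => expand i]
    rw [Finset.sum_sub_distrib, Finset.sum_add_distrib, Finset.sum_sub_distrib,
      ← Finset.mul_sum, ← Finset.mul_sum, hsum, Finset.sum_const, Finset.card_fin,
      nsmul_eq_mul]
    field_simp
    ring
  -- each t i ≤ 1
  have hle : ∀ i, t i ≤ 1 := by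
    intro i
    rw [← hsum]
    exact Finset.single_le_sum (fun j _ => hnonneg j) (Finset.mem_univ i)
  have hterm_nonpos : ∀ i ∈ Finset.univ, (t i - 1 / m) ^ 2 * (t i - 1) ≤ 0 := by
    intro i _
    exact mul_nonpos_of_nonneg_of_nonpos (sq_nonneg _) (by linarith [hle i])
  constructor
  · intro h
    have hz : ∑ i, (t i - 1 / m) ^ 2 * (t i - 1) = 0 := by rw [key, h]
    have heach := (Finset.sum_eq_zero_iff_of_nonpos hterm_nonpos).mp hz
    intro i
    have hi := heach i (Finset.mem_univ i)
    rcases mul_eq_zero.mp hi with h1 | h2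
    · have := pow_eq_zero_iff (n := 2) (by norm_num) |>.mp h1
      linarith
    · -- t i = 1; derive contradiction
      exfalso
      have hti : t i = 1 := by linarith
      have hrest : ∑ j ∈ Finset.univ.erase i, t j = 0 := by
        have := Finset.add_sum_erase Finset.univ t (Finset.mem_univ i)
        rw [← this, hti] at hsum
        linarith
      obtain ⟨j, hj⟩ : ∃ j, j ≠ i := by
        haveI : Nontrivial (Fin m) := Fin.nontrivial_iff_two_le.mpr hm
        exact exists_ne i
      have hjmem : j ∈ Finset.univ.erase i := Finset.mem_erase.mpr ⟨hj, Finset.mem_univ j⟩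
      have htj : t j = 0 :=
        (Finset.sum_eq_zero_iff_of_nonneg (fun k _ => hnonneg k)).mp hrest j hjmem
      have hjz := heach j (Finset.mem_univ j)
      rw [htj] at hjz
      have h1m : (1 : ℝ) / m ≠ 0 := by positivity
      rcases mul_eq_zero.mp hjz with h1 | h2
      · have := pow_eq_zero_iff (n := 2) (by norm_num) |>.mp h1
        exact h1m (by linarith)
      · linarith
  · intro h
    rw [← key]
    apply Finset.sum_eq_zero
    intro i _
    rw [h i]
    ring
end

section
/- Let m be a positive integer, set n = 2m + 1, and let t_1, …, t_m be nonnegative real numbers with ∑_{i=1}^m t_i = 1. Then ∑_{i=1}^m t_i³ − (1 + 4/n)·∑_{i=1}^m t_i² + 2/n + 4/n² < 0 (strict inequality). -/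
theorem stmt_5 (m : ℕ) (hm : 0 < m) (n : ℕ) (hn : n = 2 * m + 1) (t : Fin m → ℝ)
    (hnonneg : ∀ i, 0 ≤ t i) (hsum : ∑ i, t i = 1) :
    ∑ i, (t i) ^ 3 - (1 + 4 / (n : ℝ)) * ∑ i, (t i) ^ 2 + 2 / (n : ℝ) + 4 / (n : ℝ) ^ 2 < 0 := by
  have hN : (n : ℝ) = 2 * m + 1 := by rw [hn]; push_cast; ring
  have hNpos : (0 : ℝ) < n := by rw [hN]; positivity
  have hNne : (n : ℝ) ≠ 0 := ne_of_gt hNpos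
  have hle : ∀ i, t i ≤ 1 := by
    intro i
    rw [← hsum]
    exact Finset.single_le_sum (fun j _ => hnonneg j) (Finset.mem_univ i)
  have key : ∀ i ∈ Finset.univ, (t i) ^ 3 - (1 + 4 / (n : ℝ)) * (t i) ^ 2
      + (2 / (n : ℝ) + 4 / (n : ℝ) ^ 2) * (t i)
      ≤ -2 / (n : ℝ) * t i + 4 / (n : ℝ) ^ 2 := by
    intro i _
    have hid : (t i) ^ 3 - (1 + 4 / (n : ℝ)) * (t i) ^ 2
        + (2 / (n : ℝ) + 4 / (n : ℝ) ^ 2) * (t i)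
        - (-2 / (n : ℝ) * t i + 4 / (n : ℝ) ^ 2)
        = (t i - 2 / (n : ℝ)) ^ 2 * (t i - 1) := by
      field_simp
      ring
    have h2 : (t i - 2 / (n : ℝ)) ^ 2 * (t i - 1) ≤ 0 :=
      mul_nonpos_of_nonneg_of_nonpos (sq_nonneg _) (by linarith [hle i])
    linarith [hid ▸ h2]
  have hsum3 := Finset.sum_le_sum key
  have hL : ∑ i, ((t i) ^ 3 - (1 + 4 / (n : ℝ)) * (t i) ^ 2
      + (2 / (n : ℝ) + 4 / (n : ℝ) ^ 2) * (t i))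
      = ∑ i, (t i) ^ 3 - (1 + 4 / (n : ℝ)) * ∑ i, (t i) ^ 2 + 2 / (n : ℝ) + 4 / (n : ℝ) ^ 2 := by
    rw [Finset.sum_add_distrib, Finset.sum_sub_distrib, ← Finset.mul_sum, ← Finset.mul_sum, hsum]
    ring
  have hR : ∑ i : Fin m, (-2 / (n : ℝ) * t i + 4 / (n : ℝ) ^ 2)
      = -2 / (n : ℝ) + (m : ℝ) * (4 / (n : ℝ) ^ 2) := by
    rw [Finset.sum_add_distrib, ← Finset.mul_sum, hsum, Finset.sum_const]
    simp [mul_comm]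
  rw [hL, hR] at hsum3
  have hfin : -2 / (n : ℝ) + (m : ℝ) * (4 / (n : ℝ) ^ 2) < 0 := by
    have h2m : (0:ℝ) < 2 * (m:ℝ) + 1 := by positivity
    rw [hN]
    have : -2 / (2 * (m:ℝ) + 1) + (m : ℝ) * (4 / (2 * (m:ℝ) + 1) ^ 2)
        = -(2 / (2 * (m:ℝ) + 1) ^ 2) := by
      field_simp
      ring
    rw [this]
    simp only [neg_neg, neg_lt_zero]
    positivity
  linarith
end

section
/- Let n be an even positive integer and let Ω be an n×n real skew-symmetric matrix (Ωᵀ = −Ω). Set H = Ω·Ωᵀ. Then tr(H³) − (1/2 + 2/n)·tr(H)·tr(H²) + (1/(2n) + 1/n²)·(tr H)³ ≤ 0. -/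
/-!
If `v` is an eigenvector of `H = Ω Ωᵀ` for an eigenvalue `μ > 0`, then `Ω v` is a nonzero
eigenvector for the same eigenvalue and is orthogonal to `v` (`Ω` is skew), so `μ` occurs at least
twice among the (nonnegative) eigenvalues and `2μ ≤ tr H`. Writing `t = tr H` and `λᵢ` for the
eigenvalues, the inequality is then `-1/(2n²)` times `∑ᵢ (n λᵢ - t)² (t - 2 λᵢ) ≥ 0`.
-/

open Matrix

namespace Matrix.IsHermitian

variable {𝕜 ι : Type*} [RCLike 𝕜] [Fintype ι] [DecidableEq ι] {A : Matrix ι ι 𝕜}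

theorem trace_pow_eq_sum_eigenvalues_pow (hA : A.IsHermitian) (k : ℕ) :
    (A ^ k).trace = ∑ i, (hA.eigenvalues i : 𝕜) ^ k := by
  conv_lhs => rw [hA.spectral_theorem, ← map_pow, Unitary.conjStarAlgAut_apply, trace_mul_cycle,
    Unitary.coe_star_mul_self, one_mul, diagonal_pow, trace_diagonal]
  simp

theorem exists_ne_eigenvalues_eq_of_orthogonal (hA : A.IsHermitian) {j : ι} {w : ι → 𝕜}
    (hw : w ≠ 0) (hAw : A *ᵥ w = (hA.eigenvalues j : 𝕜) • w)
    (horth : w ⬝ᵥ star ⇑(hA.eigenvectorBasis j) = 0) :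
    ∃ k ≠ j, hA.eigenvalues k = hA.eigenvalues j := by
  obtain ⟨k, hk⟩ : ∃ k, w ⬝ᵥ star ⇑(hA.eigenvectorBasis k) ≠ 0 := by
    by_contra! h
    apply hw
    have : hA.eigenvectorBasis.repr (WithLp.toLp 2 w) = 0 := by
      ext k
      simpa [OrthonormalBasis.repr_apply_apply, EuclideanSpace.inner_eq_star_dotProduct] using h k
    simpa using this
  refine ⟨k, fun hkj => hk (hkj ▸ horth), ?_⟩
  have hcoeff : (A *ᵥ w) ⬝ᵥ star ⇑(hA.eigenvectorBasis k)
      = (hA.eigenvalues k : 𝕜) * (w ⬝ᵥ star ⇑(hA.eigenvectorBasis k)) := by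
    have hstar : star ⇑(hA.eigenvectorBasis k) ᵥ* A
        = (hA.eigenvalues k : 𝕜) • star ⇑(hA.eigenvectorBasis k) := by
      have h := star_mulVec Aᴴ (hA.eigenvectorBasis k)
      rw [conjTranspose_conjTranspose, hA.eq, hA.mulVec_eigenvectorBasis] at h
      simp [← h, star_smul]
    rw [dotProduct_comm, dotProduct_mulVec, hstar, smul_dotProduct, smul_eq_mul, dotProduct_comm]
  rw [hAw, smul_dotProduct, smul_eq_mul] at hcoeff
  exact_mod_cast (mul_right_cancel₀ hk hcoeff).symm

end Matrix.IsHermitian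

theorem sum_cube_sub_le_zero_of_two_mul_le_sum {ι : Type*} [Fintype ι] [Nonempty ι]
    (x : ι → ℝ) (hx : ∀ i, 2 * x i ≤ ∑ j, x j) :
    ∑ i, x i ^ 3
      - (1 / 2 + 2 / (Fintype.card ι : ℝ)) * (∑ i, x i) * ∑ i, x i ^ 2
      + (1 / (2 * (Fintype.card ι : ℝ)) + 1 / (Fintype.card ι : ℝ) ^ 2) * (∑ i, x i) ^ 3 ≤ 0 := by
  set N : ℝ := (Fintype.card ι : ℝ)
  set t := ∑ i, x i
  have hN : N ≠ 0 := by positivity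
  have hsum : ∑ i, (N * x i - t) ^ 2 * (t - 2 * x i)
      = -2 * N ^ 2 * ∑ i, x i ^ 3 + (N ^ 2 + 4 * N) * t * ∑ i, x i ^ 2 - (N + 2) * t ^ 3 := by
    have h (i : ι) : (N * x i - t) ^ 2 * (t - 2 * x i)
        = -2 * N ^ 2 * x i ^ 3 + (N ^ 2 + 4 * N) * t * x i ^ 2 - 2 * (N + 1) * t ^ 2 * x i
          + t ^ 3 := by ring
    simp only [h, Finset.sum_add_distrib, Finset.sum_sub_distrib, ← Finset.mul_sum,
      Finset.sum_const, Finset.card_univ, nsmul_eq_mul]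
    ring
  have hexpand : ∑ i, x i ^ 3 - (1 / 2 + 2 / N) * t * ∑ i, x i ^ 2
      + (1 / (2 * N) + 1 / N ^ 2) * t ^ 3
      = -(∑ i, (N * x i - t) ^ 2 * (t - 2 * x i)) / (2 * N ^ 2) := by
    rw [hsum]
    field_simp
    ring
  rw [hexpand]
  refine div_nonpos_of_nonpos_of_nonneg (neg_nonpos.2 ?_) (by positivity)
  exact Finset.sum_nonneg fun i _ => mul_nonneg (sq_nonneg _) (sub_nonneg.2 (hx i))

namespace Matrix

theorem two_mul_eigenvalues_mul_transpose_le_trace {ι : Type*} [Fintype ι] [DecidableEq ι]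
    {Ω : Matrix ι ι ℝ} (hskew : Ωᵀ = -Ω) (hH : (Ω * Ωᵀ).IsHermitian) (j : ι) :
    2 * hH.eigenvalues j ≤ (Ω * Ωᵀ).trace := by
  have hPSD : (Ω * Ωᵀ).PosSemidef := by
    simpa [conjTranspose_eq_transpose_of_trivial] using posSemidef_self_mul_conjTranspose Ω
  rcases (hPSD.eigenvalues_nonneg j).eq_or_lt with hμ | hμ
  · rw [← hμ, mul_zero]
    exact hPSD.trace_nonneg
  set v : ι → ℝ := ⇑(hH.eigenvectorBasis j)
  have hv : (Ω * Ωᵀ) *ᵥ v = hH.eigenvalues j • v := hH.mulVec_eigenvectorBasis j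
  have hw : (Ω * Ωᵀ) *ᵥ (Ω *ᵥ v) = hH.eigenvalues j • (Ω *ᵥ v) := by
    have hcomm : Ω * Ωᵀ * Ω = Ω * (Ω * Ωᵀ) := by
      simp only [hskew, Matrix.mul_neg, Matrix.neg_mul, Matrix.mul_assoc]
    rw [mulVec_mulVec, hcomm, ← mulVec_mulVec, hv, mulVec_smul]
  have horth : (Ω *ᵥ v) ⬝ᵥ v = 0 := by
    have h : v ⬝ᵥ (Ω *ᵥ v) = -((Ω *ᵥ v) ⬝ᵥ v) := by
      rw [dotProduct_mulVec, ← mulVec_transpose, hskew, neg_mulVec, neg_dotProduct]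
    linarith [dotProduct_comm v (Ω *ᵥ v)]
  have hw0 : Ω *ᵥ v ≠ 0 := by
    intro h0
    have hv0 : v ≠ 0 := (WithLp.ofLp_eq_zero 2).ne.2 (hH.eigenvectorBasis.orthonormal.ne_zero j)
    have : hH.eigenvalues j • v = 0 := by
      rw [← hv, ← mulVec_mulVec, hskew, neg_mulVec, h0, neg_zero, mulVec_zero]
    exact hμ.ne' ((smul_eq_zero.1 this).resolve_right hv0)
  obtain ⟨k, hkj, hk⟩ := hH.exists_ne_eigenvalues_eq_of_orthogonal hw0 (by simpa using hw)
    (by simpa using horth)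
  calc 2 * hH.eigenvalues j = hH.eigenvalues j + hH.eigenvalues k := by rw [hk]; ring
    _ ≤ ∑ i, hH.eigenvalues i :=
      Finset.add_le_sum (fun i _ => hPSD.eigenvalues_nonneg i) (Finset.mem_univ j)
        (Finset.mem_univ k) hkj.symm
    _ = (Ω * Ωᵀ).trace := by simp [hH.trace_eq_sum_eigenvalues]

end Matrix

theorem stmt_6_general (n : ℕ) (hn : 0 < n)
    (Ω : Matrix (Fin n) (Fin n) ℝ) (hskew : Ωᵀ = -Ω) :
    (Ω * Ωᵀ * (Ω * Ωᵀ) * (Ω * Ωᵀ)).trace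
      - (1 / 2 + 2 / (n : ℝ)) * (Ω * Ωᵀ).trace * (Ω * Ωᵀ * (Ω * Ωᵀ)).trace
      + (1 / (2 * (n : ℝ)) + 1 / (n : ℝ) ^ 2) * (Ω * Ωᵀ).trace ^ 3 ≤ 0 := by
  have hH : (Ω * Ωᵀ).IsHermitian := by
    simpa [conjTranspose_eq_transpose_of_trivial] using isHermitian_mul_conjTranspose_self Ω
  have : Nonempty (Fin n) := ⟨⟨0, hn⟩⟩
  have htrace (k : ℕ) : ((Ω * Ωᵀ) ^ k).trace = ∑ i, hH.eigenvalues i ^ k := by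
    simpa using hH.trace_pow_eq_sum_eigenvalues_pow k
  have htrace_one : (Ω * Ωᵀ).trace = ∑ i, hH.eigenvalues i := by simpa using htrace 1
  rw [← pow_two, ← pow_succ, htrace, htrace, htrace_one]
  simpa using sum_cube_sub_le_zero_of_two_mul_le_sum hH.eigenvalues fun i =>
    htrace_one ▸ two_mul_eigenvalues_mul_transpose_le_trace hskew hH i

theorem stmt_6 (n : ℕ) (hn : 0 < n) (hne : Even n)
    (Ω : Matrix (Fin n) (Fin n) ℝ) (hskew : Ωᵀ = -Ω) :
    (Ω * Ωᵀ * (Ω * Ωᵀ) * (Ω * Ωᵀ)).trace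
      - (1 / 2 + 2 / (n : ℝ)) * (Ω * Ωᵀ).trace * (Ω * Ωᵀ * (Ω * Ωᵀ)).trace
      + (1 / (2 * (n : ℝ)) + 1 / (n : ℝ) ^ 2) * (Ω * Ωᵀ).trace ^ 3 ≤ 0 :=
  stmt_6_general n hn Ω hskew
end

section
/- Let n be an odd positive integer and let Ω be a nonzero n×n real skew-symmetric matrix (Ωᵀ = −Ω). Set H = Ω·Ωᵀ. Then tr(H³) − (1/2 + 2/n)·tr(H)·tr(H²) + (1/(2n) + 1/n²)·(tr H)³ < 0 (strict inequality). -/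
/-!
Let `d` be the eigenvalues of `H = Ω Ωᵀ ⪰ 0`. Conjugating `Ω` by an orthogonal eigenbasis of `H`
makes `H` diagonal while `Ω` stays skew. Since `Ω` commutes with `H = -Ω²`, every nonzero
eigenvalue, in particular the largest one `m > 0`, is attained at least twice, and `det Ω = 0` in
odd dimension gives a zero eigenvalue. With `r₁, r₂, r₃` the power sums of the remaining `n - 3`
eigenvalues, Cauchy–Schwarz `r₁² ≤ (n - 3) r₂` and `r₃ ≤ m r₂` reduce the claim to a cubic
inequality in `m` and `r₁`.
-/

open Matrix Finset

lemma cubic_neg_of_three_lt {N m r : ℝ} (hN : 3 < N) (hm : 0 < m) (hr : 0 ≤ r) :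
    -8 * (N - 2) * (N - 3) * m ^ 3 - 2 * (N ^ 3 - 5 * N ^ 2 - 6 * N + 36) * m ^ 2 * r
      + (6 * N ^ 2 - 14 * N - 36) * m * r ^ 2 - (5 * N + 6) * r ^ 3 < 0 := by
  have hs : 0 < N - 3 := by linarith
  -- the three squares absorb, by AM–GM, the three negative monomials in `N - 3`, `m`, `r`
  nlinarith [mul_nonneg hm.le (sq_nonneg (8 * (N - 3) * m - 9 * r)),
    mul_nonneg hr (sq_nonneg (8 * (N - 3) * m - 11 * r)),
    mul_nonneg (mul_nonneg hs.le hr) (sq_nonneg (2 * (N - 3) * m - 3 * r)),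
    mul_pos hs (pow_pos hm 3), mul_nonneg hm.le (sq_nonneg r), pow_nonneg hr 3,
    mul_nonneg hs.le (pow_nonneg hr 3)]

lemma moment_combination_neg {N m r₁ r₂ r₃ : ℝ} (hN : 3 ≤ N) (hm : 0 < m) (hr₁ : 0 ≤ r₁)
    (hr₂ : 0 ≤ r₂) (hcs : r₁ ^ 2 ≤ (N - 3) * r₂) (h₃ : r₃ ≤ m * r₂) :
    2 * N ^ 2 * (2 * m ^ 3 + r₃) - N * (N + 4) * (2 * m + r₁) * (2 * m ^ 2 + r₂)
      + (N + 2) * (2 * m + r₁) ^ 3 < 0 := by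
  rcases hN.eq_or_lt with rfl | hN
  · obtain rfl : r₁ = 0 := by nlinarith
    nlinarith [pow_pos hm 3, mul_nonneg hm.le hr₂]
  · have h₁ : 0 ≤ (8 * N * m + N * (N + 4) * r₁) * ((N - 3) * r₂ - r₁ ^ 2) :=
      mul_nonneg (by positivity) (by linarith)
    have h₂ : 0 ≤ 2 * N ^ 2 * (N - 3) * (m * r₂ - r₃) :=
      mul_nonneg (by nlinarith) (by linarith)
    refine neg_of_mul_neg_right (a := N - 3) ?_ (by linarith)
    linear_combination cubic_neg_of_three_lt hN hm hr₁ + h₁ + h₂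

lemma sum_pow_combination_neg {ι : Type*} [Fintype ι] [DecidableEq ι] {d : ι → ℝ}
    (hd : ∀ i, 0 ≤ d i) {i₀ j₀ k : ι} (hmax : ∀ i, d i ≤ d i₀) (hpos : 0 < d i₀) (hj₀ : j₀ ≠ i₀)
    (hdj₀ : d j₀ = d i₀) (hk : d k = 0) :
    2 * (Fintype.card ι : ℝ) ^ 2 * ∑ i, d i ^ 3
      - Fintype.card ι * (Fintype.card ι + 4) * (∑ i, d i) * ∑ i, d i ^ 2
      + (Fintype.card ι + 2) * (∑ i, d i) ^ 3 < 0 := by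
  set m := d i₀
  have hki₀ : k ≠ i₀ := by rintro rfl; linarith
  have hkj₀ : k ≠ j₀ := by rintro rfl; linarith
  set S : Finset ι := {i₀, j₀, k}
  have hS : #S = 3 := card_eq_three.2 ⟨i₀, j₀, k, hj₀.symm, hki₀.symm, hkj₀.symm, rfl⟩
  have hsplit (p : ℕ) (hp : p ≠ 0) : ∑ i, d i ^ p = 2 * m ^ p + ∑ i ∈ Sᶜ, d i ^ p := by
    rw [← sum_add_sum_compl S, sum_insert (by simp [hj₀.symm, hki₀.symm]),
      sum_insert (by simp [hkj₀.symm]), sum_singleton, hdj₀, hk, zero_pow hp]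
    ring
  have hcard : (#Sᶜ : ℝ) = Fintype.card ι - 3 := by
    rw [card_compl, hS, Nat.cast_sub (hS ▸ card_le_univ S), Nat.cast_ofNat]
  have hcs := sq_sum_le_card_mul_sum_sq (s := Sᶜ) (f := d)
  rw [hcard] at hcs
  have h₃ : ∑ i ∈ Sᶜ, d i ^ 3 ≤ m * ∑ i ∈ Sᶜ, d i ^ 2 := by
    rw [mul_sum]
    exact sum_le_sum fun i _ => by nlinarith [hd i, hmax i, sq_nonneg (d i)]
  have hN : (3 : ℝ) ≤ Fintype.card ι := by exact_mod_cast hS ▸ card_le_univ S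
  have h := moment_combination_neg hN hpos (sum_nonneg fun i _ => hd i)
    (sum_nonneg fun i _ => sq_nonneg (d i)) hcs h₃
  have h₁ : ∑ i, d i = 2 * m + ∑ i ∈ Sᶜ, d i := by simpa using hsplit 1 one_ne_zero
  rwa [h₁, hsplit 2 two_ne_zero, hsplit 3 three_ne_zero]

lemma combination_neg_of_cleared_neg {n a b c : ℝ} (hn : 0 < n)
    (h : 2 * n ^ 2 * c - n * (n + 4) * a * b + (n + 2) * a ^ 3 < 0) :
    c - (1 / 2 + 2 / n) * a * b + (1 / (2 * n) + 1 / n ^ 2) * a ^ 3 < 0 := by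
  have key : 2 * n ^ 2 * (c - (1 / 2 + 2 / n) * a * b + (1 / (2 * n) + 1 / n ^ 2) * a ^ 3)
      = 2 * n ^ 2 * c - n * (n + 4) * a * b + (n + 2) * a ^ 3 := by
    field_simp
    ring
  exact neg_of_mul_neg_right (key ▸ h) (by positivity)

namespace Matrix

section Skew

variable {R : Type*} [CommRing R] [NoZeroDivisors R] [CharZero R] {n : Type*} [Fintype n]
  [DecidableEq n] {Ω : Matrix n n R}

theorem det_eq_zero_of_transpose_eq_neg (hΩ : Ωᵀ = -Ω) (hn : Odd (Fintype.card n)) :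
    Ω.det = 0 := by
  refine CharZero.eq_neg_self_iff.1 ?_
  conv_lhs => rw [← det_transpose, hΩ, det_neg, hn.neg_one_pow, neg_one_mul]

variable {d : n → R}

theorem exists_eq_zero_of_mul_transpose_eq_diagonal (hΩ : Ωᵀ = -Ω)
    (hd : Ω * Ωᵀ = diagonal d) (hn : Odd (Fintype.card n)) : ∃ k, d k = 0 := by
  have h : ∏ k, d k = 0 := by
    rw [← det_diagonal, ← hd, det_mul, det_eq_zero_of_transpose_eq_neg hΩ hn, zero_mul]
  simpa using Finset.prod_eq_zero_iff.1 h

theorem exists_ne_eq_of_mul_transpose_eq_diagonal (hΩ : Ωᵀ = -Ω)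
    (hd : Ω * Ωᵀ = diagonal d) {i : n} (hi : d i ≠ 0) : ∃ j ≠ i, d j = d i := by
  obtain ⟨j, hj⟩ : ∃ j, Ω i j ≠ 0 := by
    by_contra! h
    apply hi
    rw [← diagonal_apply_eq d i, ← hd, mul_apply]
    simp [h]
  have hcomm : Ω * diagonal d = diagonal d * Ω := by
    rw [← hd, hΩ]
    simp [Matrix.mul_assoc]
  refine ⟨j, ?_, ?_⟩
  · rintro rfl
    exact hj (CharZero.eq_neg_self_iff.1 (congrFun (congrFun hΩ j) j))
  · have h := congrFun (congrFun hcomm i) j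
    simp only [mul_diagonal, diagonal_mul] at h
    exact mul_left_cancel₀ hj (by rw [h, mul_comm])

end Skew

open scoped ComplexOrder in
theorem PosSemidef.exists_max_eigenvalue_pos {𝕜 : Type*} [RCLike 𝕜] {n : Type*} [Fintype n]
    [DecidableEq n] {A : Matrix n n 𝕜} (hA : A.PosSemidef) (hA₀ : A ≠ 0) :
    ∃ i₀, 0 < hA.1.eigenvalues i₀ ∧ ∀ i, hA.1.eigenvalues i ≤ hA.1.eigenvalues i₀ := by
  obtain ⟨i, hi⟩ : ∃ i, hA.1.eigenvalues i ≠ 0 := by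
    by_contra! h
    exact hA₀ (hA.1.eigenvalues_eq_zero_iff.1 (funext h))
  obtain ⟨i₀, -, hmax⟩ := exists_max_image univ hA.1.eigenvalues ⟨i, mem_univ i⟩
  exact ⟨i₀, ((hA.eigenvalues_nonneg i).lt_of_ne' hi).trans_le (hmax i (mem_univ i)),
    fun j => hmax j (mem_univ j)⟩

theorem IsHermitian.trace_pow_eq_sum_eigenvalues_pow_s7 {𝕜 : Type*} [RCLike 𝕜] {n : Type*}
    [Fintype n] [DecidableEq n] {A : Matrix n n 𝕜} (hA : A.IsHermitian) (k : ℕ) :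
    (A ^ k).trace = ∑ i, (hA.eigenvalues i : 𝕜) ^ k := by
  conv_lhs => rw [hA.spectral_theorem, ← map_pow, Unitary.conjStarAlgAut_apply, trace_mul_cycle,
    Unitary.coe_star_mul_self, Matrix.one_mul, diagonal_pow, trace_diagonal]
  rfl

theorem exists_transpose_eq_neg_mul_transpose_eq_diagonal_eigenvalues {n : Type*} [Fintype n]
    [DecidableEq n] {Ω : Matrix n n ℝ} (hΩ : Ωᵀ = -Ω) (hH : (Ω * Ωᵀ).IsHermitian) :
    ∃ Ω' : Matrix n n ℝ, Ω'ᵀ = -Ω' ∧ Ω' * Ω'ᵀ = diagonal hH.eigenvalues := by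
  set U : Matrix n n ℝ := ↑hH.eigenvectorUnitary
  have hUt : star U = Uᵀ := by rw [star_eq_conjTranspose, conjTranspose_eq_transpose_of_trivial]
  have hUU : U * star U = 1 := Unitary.mul_star_self_of_mem hH.eigenvectorUnitary.2
  have hdiag := hH.conjStarAlgAut_star_eigenvectorUnitary
  rw [Unitary.conjStarAlgAut_star_apply, RCLike.ofReal_real_eq_id, Function.id_comp] at hdiag
  refine ⟨Uᵀ * Ω * U, ?_, ?_⟩
  · simp [transpose_mul, hΩ, Matrix.mul_assoc]
  · calc Uᵀ * Ω * U * (Uᵀ * Ω * U)ᵀ = star U * (Ω * (U * star U) * Ωᵀ) * U := by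
          simp only [hUt, transpose_mul, transpose_transpose, Matrix.mul_assoc]
      _ = diagonal hH.eigenvalues := by
          rw [hUU, Matrix.mul_one]
          exact hdiag

end Matrix

theorem stmt_7_general (n : ℕ) (hno : Odd n)
    (Ω : Matrix (Fin n) (Fin n) ℝ) (hΩ : Ω ≠ 0) (hskew : Ωᵀ = -Ω) :
    (Ω * Ωᵀ * (Ω * Ωᵀ) * (Ω * Ωᵀ)).trace
      - (1 / 2 + 2 / (n : ℝ)) * (Ω * Ωᵀ).trace * (Ω * Ωᵀ * (Ω * Ωᵀ)).trace
      + (1 / (2 * (n : ℝ)) + 1 / (n : ℝ) ^ 2) * (Ω * Ωᵀ).trace ^ 3 < 0 := by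
  have hP : (Ω * Ωᵀ).PosSemidef := by
    simpa [conjTranspose_eq_transpose_of_trivial] using posSemidef_self_mul_conjTranspose Ω
  have hH₀ : Ω * Ωᵀ ≠ 0 := by
    simpa [conjTranspose_eq_transpose_of_trivial] using (self_mul_conjTranspose_eq_zero.not.2 hΩ)
  set d := hP.1.eigenvalues
  obtain ⟨i₀, hpos, hmax⟩ := hP.exists_max_eigenvalue_pos hH₀
  obtain ⟨Ω', hΩ'skew, hΩ'diag⟩ :=
    exists_transpose_eq_neg_mul_transpose_eq_diagonal_eigenvalues hskew hP.1
  obtain ⟨j₀, hj₀, hdj₀⟩ := exists_ne_eq_of_mul_transpose_eq_diagonal hΩ'skew hΩ'diag hpos.ne'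
  obtain ⟨k, hk⟩ := exists_eq_zero_of_mul_transpose_eq_diagonal hΩ'skew hΩ'diag (by simpa)
  have h := sum_pow_combination_neg hP.eigenvalues_nonneg hmax hpos hj₀ hdj₀ hk
  have htr (p : ℕ) : ((Ω * Ωᵀ) ^ p).trace = ∑ i, d i ^ p := by
    simpa using hP.1.trace_pow_eq_sum_eigenvalues_pow_s7 p
  have htr₁ : (Ω * Ωᵀ).trace = ∑ i, d i := by simpa using htr 1
  rw [← sq, ← pow_succ, htr, htr, htr₁]
  exact combination_neg_of_cleared_neg (by exact_mod_cast hno.pos) (by simpa using h)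

theorem stmt_7 (n : ℕ) (hn : 0 < n) (hno : Odd n)
    (Ω : Matrix (Fin n) (Fin n) ℝ) (hΩ : Ω ≠ 0) (hskew : Ωᵀ = -Ω) :
    (Ω * Ωᵀ * (Ω * Ωᵀ) * (Ω * Ωᵀ)).trace
      - (1 / 2 + 2 / (n : ℝ)) * (Ω * Ωᵀ).trace * (Ω * Ωᵀ * (Ω * Ωᵀ)).trace
      + (1 / (2 * (n : ℝ)) + 1 / (n : ℝ) ^ 2) * (Ω * Ωᵀ).trace ^ 3 < 0 :=
  stmt_7_general n hno Ω hΩ hskew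
end

section
/- Let m ≥ 2 and 1 ≤ r ≤ m−1 be integers. For i = 1, …, m let n_i ≥ 2 and a_i > 0 be real numbers satisfying n_1·a_1 ≤ n_2·a_2 ≤ ⋯ ≤ n_m·a_m, and set E = (1/(4r))·∑_{j=1}^m n_j·a_j. Let μ_1, …, μ_{m−r} be real numbers and set μ_0 = μ_{m−r+1} = 0. Then ∑_{i=1}^{m−r+1} (μ_i − μ_{i−1})²·(−(2/n_i)·E + a_i/n_i) ≤ −(1/(2r))·( μ_1²·a_1 + ∑_{i=2}^{m−r} (μ_i − μ_{i−1})²·a_i ); in particular the left-hand side is strictly negative unless μ_1 = ⋯ = μ_{m−r} = 0. -/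
theorem stmt_10 (m r : ℕ) (hm : 2 ≤ m) (hr1 : 1 ≤ r) (hr2 : r ≤ m - 1)
    (n a : ℕ → ℝ) (E : ℝ)
    (hn : ∀ i ∈ Finset.Icc 1 m, 2 ≤ n i)
    (ha : ∀ i ∈ Finset.Icc 1 m, 0 < a i)
    (hmono : ∀ i, 1 ≤ i → i < m → n i * a i ≤ n (i + 1) * a (i + 1))
    (hE : E = (1 / (4 * (r : ℝ))) * ∑ j ∈ Finset.Icc 1 m, n j * a j)
    (μ : ℕ → ℝ) (hμ0 : μ 0 = 0) (hμtop : μ (m - r + 1) = 0) :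
    (∑ i ∈ Finset.Icc 1 (m - r + 1),
        (μ i - μ (i - 1)) ^ 2 * (-(2 / n i) * E + a i / n i)
      ≤ -(1 / (2 * (r : ℝ))) *
        (μ 1 ^ 2 * a 1 + ∑ i ∈ Finset.Icc 2 (m - r), (μ i - μ (i - 1)) ^ 2 * a i)) ∧
    ((∃ i ∈ Finset.Icc 1 (m - r), μ i ≠ 0) →
      ∑ i ∈ Finset.Icc 1 (m - r + 1),
        (μ i - μ (i - 1)) ^ 2 * (-(2 / n i) * E + a i / n i) < 0) := by
  have hrm : r < m := by omega
  set s := m - r with hsdef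
  have hs1 : 1 ≤ s := by omega
  have hsm : s + 1 ≤ m := by omega
  have hrpos : (0:ℝ) < r := by exact_mod_cast Nat.lt_of_lt_of_le Nat.zero_lt_one hr1
  -- monotone chain
  have hchain : ∀ i, 1 ≤ i → ∀ j, i ≤ j → j ≤ m → n i * a i ≤ n j * a j := by
    intro i hi j hij
    induction j, hij using Nat.le_induction with
    | base => intro _; exact le_refl _
    | succ k hk ih =>
      intro hkm
      exact (ih (by omega)).trans (hmono k (by omega) (by omega))
  have hpos : ∀ j ∈ Finset.Icc 1 m, 0 < n j * a j := by
    intro j hj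
    have h1 := hn j hj; have h2 := ha j hj
    have : (0:ℝ) < n j := by linarith
    exact mul_pos this h2
  -- sum lower bound
  have hSsum : ∀ i, 1 ≤ i → i ≤ m →
      ((m - i + 1 : ℕ) : ℝ) * (n i * a i) ≤ ∑ j ∈ Finset.Icc 1 m, n j * a j := by
    intro i hi him
    have hsub : Finset.Icc i m ⊆ Finset.Icc 1 m := Finset.Icc_subset_Icc (by omega) le_rfl
    have h1 : ∑ j ∈ Finset.Icc i m, n j * a j ≤ ∑ j ∈ Finset.Icc 1 m, n j * a j :=
      Finset.sum_le_sum_of_subset_of_nonneg hsub (fun j hj _ => (hpos j hj).le)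
    have h2 : (Finset.Icc i m).card • (n i * a i) ≤ ∑ j ∈ Finset.Icc i m, n j * a j :=
      Finset.card_nsmul_le_sum _ _ _ (fun j hj => by
        rw [Finset.mem_Icc] at hj
        exact hchain i hi j hj.1 hj.2)
    rw [Nat.card_Icc, nsmul_eq_mul] at h2
    have hc : m + 1 - i = m - i + 1 := by omega
    rw [hc] at h2
    exact h2.trans h1
  have h4rE : 4 * (r:ℝ) * E = ∑ j ∈ Finset.Icc 1 m, n j * a j := by
    rw [hE]; field_simp
  -- coefficient bounds
  have hcoef : ∀ i, 1 ≤ i → i ≤ s →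
      -(2 / n i) * E + a i / n i ≤ -(1 / (2 * (r:ℝ))) * a i := by
    intro i hi his
    have him : i ≤ m := by omega
    have hni : (2:ℝ) ≤ n i := hn i (Finset.mem_Icc.mpr ⟨hi, him⟩)
    have hni0 : (0:ℝ) < n i := by linarith
    have hai : (0:ℝ) < a i := ha i (Finset.mem_Icc.mpr ⟨hi, him⟩)
    have hS := hSsum i hi him
    have hk : (r:ℝ) + 1 ≤ ((m - i + 1 : ℕ) : ℝ) := by
      have : r + 1 ≤ m - i + 1 := by omega
      exact_mod_cast this
    rw [← h4rE] at hS
    have heq : -(2 / n i) * E + a i / n i = (a i - 2*E) / n i := by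
      field_simp; ring
    rw [heq, div_le_iff₀ hni0]
    have key : (a i - 2*E) * (2*(r:ℝ)) ≤ -(a i) * n i := by
      nlinarith [hS, mul_nonneg (mul_nonneg (sub_nonneg.mpr hk) hni0.le) hai.le,
        mul_nonneg (mul_nonneg hrpos.le (by linarith : (0:ℝ) ≤ n i - 2)) hai.le,
        mul_pos hni0 hai]
    have h2r : (0:ℝ) < 2 * r := by linarith
    calc a i - 2*E = (a i - 2*E) * (2*(r:ℝ)) / (2*(r:ℝ)) := by field_simp
      _ ≤ (-(a i) * n i) / (2*(r:ℝ)) := by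
          exact div_le_div_of_nonneg_right key h2r.le
      _ = -(1 / (2 * (r:ℝ))) * a i * n i := by field_simp
  have hcoeftop : -(2 / n (s+1)) * E + a (s+1) / n (s+1) ≤ 0 := by
    have hi : 1 ≤ s + 1 := by omega
    have hni : (2:ℝ) ≤ n (s+1) := hn _ (Finset.mem_Icc.mpr ⟨hi, hsm⟩)
    have hni0 : (0:ℝ) < n (s+1) := by linarith
    have hai : (0:ℝ) < a (s+1) := ha _ (Finset.mem_Icc.mpr ⟨hi, hsm⟩)
    have hS := hSsum (s+1) hi hsm
    have hk : (r:ℝ) ≤ ((m - (s+1) + 1 : ℕ) : ℝ) := by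
      have : r ≤ m - (s+1) + 1 := by omega
      exact_mod_cast this
    rw [← h4rE] at hS
    have heq : -(2 / n (s+1)) * E + a (s+1) / n (s+1) = (a (s+1) - 2*E) / n (s+1) := by
      field_simp; ring
    rw [heq]
    apply div_nonpos_of_nonpos_of_nonneg _ hni0.le
    nlinarith [hS, mul_nonneg (mul_nonneg (sub_nonneg.mpr hk) hni0.le) hai.le,
      mul_nonneg (mul_nonneg hrpos.le (by linarith : (0:ℝ) ≤ n (s+1) - 2)) hai.le]
  -- splitting lemmas
  have h1ins : Finset.Icc 1 s = insert 1 (Finset.Icc 2 s) := by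
    ext x; simp only [Finset.mem_Icc, Finset.mem_insert]; omega
  have hsplitL : Finset.Icc 1 (s+1) = insert (s+1) (Finset.Icc 1 s) := by
    ext x; simp only [Finset.mem_Icc, Finset.mem_insert]; omega
  have hRHS : -(1 / (2 * (r:ℝ))) *
        (μ 1 ^ 2 * a 1 + ∑ i ∈ Finset.Icc 2 s, (μ i - μ (i - 1)) ^ 2 * a i)
      = ∑ i ∈ Finset.Icc 1 s, -(1 / (2 * (r:ℝ))) * ((μ i - μ (i - 1)) ^ 2 * a i) := by
    rw [h1ins, Finset.sum_insert (by simp)]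
    simp only [Nat.sub_self, hμ0, sub_zero]
    rw [mul_add, Finset.mul_sum]
  have hmain : ∑ i ∈ Finset.Icc 1 (s + 1),
        (μ i - μ (i - 1)) ^ 2 * (-(2 / n i) * E + a i / n i)
      ≤ -(1 / (2 * (r : ℝ))) *
        (μ 1 ^ 2 * a 1 + ∑ i ∈ Finset.Icc 2 s, (μ i - μ (i - 1)) ^ 2 * a i) := by
    rw [hRHS, hsplitL, Finset.sum_insert (by simp)]
    have hlast : (μ (s+1) - μ (s+1-1)) ^ 2 * (-(2 / n (s+1)) * E + a (s+1) / n (s+1)) ≤ 0 :=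
      mul_nonpos_of_nonneg_of_nonpos (sq_nonneg _) hcoeftop
    have hterms : ∑ i ∈ Finset.Icc 1 s, (μ i - μ (i - 1)) ^ 2 * (-(2 / n i) * E + a i / n i)
        ≤ ∑ i ∈ Finset.Icc 1 s, -(1 / (2 * (r:ℝ))) * ((μ i - μ (i - 1)) ^ 2 * a i) := by
      apply Finset.sum_le_sum
      intro i hi
      rw [Finset.mem_Icc] at hi
      calc (μ i - μ (i - 1)) ^ 2 * (-(2 / n i) * E + a i / n i)
          ≤ (μ i - μ (i - 1)) ^ 2 * (-(1 / (2 * (r:ℝ))) * a i) :=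
            mul_le_mul_of_nonneg_left (hcoef i hi.1 hi.2) (sq_nonneg _)
        _ = -(1 / (2 * (r:ℝ))) * ((μ i - μ (i - 1)) ^ 2 * a i) := by ring
    linarith
  refine ⟨hmain, ?_⟩
  rintro ⟨i0, hi0, hi0ne⟩
  rw [Finset.mem_Icc] at hi0
  set B := μ 1 ^ 2 * a 1 + ∑ i ∈ Finset.Icc 2 s, (μ i - μ (i - 1)) ^ 2 * a i with hBdef
  have hB' : B = ∑ i ∈ Finset.Icc 1 s, (μ i - μ (i - 1)) ^ 2 * a i := by
    rw [hBdef, h1ins, Finset.sum_insert (by simp)]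
    simp only [Nat.sub_self, hμ0, sub_zero]
  have hBnonneg : 0 ≤ B := by
    rw [hB']
    apply Finset.sum_nonneg
    intro i hi
    rw [Finset.mem_Icc] at hi
    exact mul_nonneg (sq_nonneg _) (ha i (Finset.mem_Icc.mpr ⟨hi.1, by omega⟩)).le
  have hBne : B ≠ 0 := by
    intro hB0
    have hdz : ∀ i ∈ Finset.Icc 1 s, (μ i - μ (i - 1)) ^ 2 * a i = 0 := by
      rw [hB'] at hB0
      exact (Finset.sum_eq_zero_iff_of_nonneg (fun i hi => by
        rw [Finset.mem_Icc] at hi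
        exact mul_nonneg (sq_nonneg _) (ha i (Finset.mem_Icc.mpr ⟨hi.1, by omega⟩)).le)).1 hB0
    have hall : ∀ i, i ≤ s → μ i = 0 := by
      intro i
      induction i with
      | zero => intro _; exact hμ0
      | succ k ih =>
        intro hk
        have h := hdz (k+1) (Finset.mem_Icc.mpr ⟨by omega, hk⟩)
        have hak : (0:ℝ) < a (k+1) := ha (k+1) (Finset.mem_Icc.mpr ⟨by omega, by omega⟩)
        have hsq : (μ (k+1) - μ (k+1-1)) ^ 2 = 0 := by
          rcases mul_eq_zero.1 h with h' | h'
          · exact h'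
          · exact absurd h' hak.ne'
        have : μ (k+1) = μ k := by
          have := pow_eq_zero_iff (n := 2) (by norm_num) |>.1 hsq
          have h2 : μ (k+1) - μ k = 0 := by simpa using this
          linarith
        rw [this]
        exact ih (by omega)
    exact hi0ne (hall i0 hi0.2)
  have hBpos : 0 < B := lt_of_le_of_ne hBnonneg (Ne.symm hBne)
  have hneg : -(1 / (2 * (r:ℝ))) * B < 0 := by
    apply mul_neg_of_neg_of_pos _ hBpos
    have : (0:ℝ) < 1 / (2 * r) := by positivity
    linarith
  exact lt_of_le_of_lt hmain hneg
end
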